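/- arXiv:math/0009257 — 5 statements merged into one kernel-verified Lean document; each statement's English description precedes it below -/
import Mathlib

section
/- Let q be a prime power, n coprime to q, and α an element of order n in an algebraic closure of F_q. Let S ⊆ {0,...,n−1} and let C be the cyclic code of length n over F_q with defining set S, i.e., C = {c ∈ F_q[x]/(x^n−1) : c(α^i) = 0 for all i ∈ S}. If S contains t consecutive integers r, r+1, ..., r+t−1, then every nonzero codeword of C has Hamming weight strictly greater than t. -/
/-- **BCH bound.** If the defining set `S` of a cyclic code of length `n` over `F_q`
(with `gcd(n,q)=1`, `α` of order `n` in the algebraic closure) contains `t` consecutive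
integers `r, r+1, …, r+t-1`, then every nonzero codeword has Hamming weight `> t`. -/
theorem bch_bound (Fq : Type*) [Field Fq] [Fintype Fq]
    (n r t : ℕ) (hn : 0 < n) (hcop : Nat.Coprime n (Fintype.card Fq))
    (α : AlgebraicClosure Fq) (hα : orderOf α = n)
    (S : Finset ℕ) (hS : ∀ j, j < t → r + j ∈ S)
    (c : Polynomial Fq) (hc : c ≠ 0) (hdeg : c.natDegree < n)
    (hroot : ∀ i ∈ S, Polynomial.aeval (α ^ i) c = 0) :
    t < c.support.card := by
  by_contra h
  push_neg at h
  set m := c.support.card with hm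
  -- enumerate the support
  have e : Fin m ≃o c.support := c.support.orderIsoOfFin rfl
  have hmem : ∀ k : Fin m, ((e k : ℕ)) ∈ c.support := fun k => (e k).2
  have hlt : ∀ k : Fin m, (e k : ℕ) < n := fun k =>
    lt_of_le_of_lt (Polynomial.le_natDegree_of_mem_supp _ (hmem k)) hdeg
  -- the evaluation points are injective
  have hf : Function.Injective (fun k : Fin m => α ^ (e k : ℕ)) := by
    intro i j hij
    have := pow_injOn_Iio_orderOf (x := α) (by rw [hα]; exact hlt i)
      (by rw [hα]; exact hlt j) hij
    exact e.injective (Subtype.ext this)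
  -- the coefficient vector
  set v : Fin m → AlgebraicClosure Fq := fun k =>
    algebraMap Fq (AlgebraicClosure Fq) (c.coeff (e k)) * α ^ (r * (e k : ℕ)) with hv
  -- the linear system from the t consecutive roots
  have hsys : ∀ i : Fin m, (∑ k : Fin m, v k * (α ^ (e k : ℕ)) ^ (i : ℕ)) = 0 := by
    intro i
    have hiS : r + (i : ℕ) ∈ S := hS _ (lt_of_lt_of_le i.2 h)
    have h0 : Polynomial.aeval (α ^ (r + (i : ℕ))) c = 0 := hroot _ hiS
    rw [Polynomial.aeval_def, Polynomial.eval₂_eq_sum, Polynomial.sum] at h0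
    have hsum : ∑ j ∈ c.support,
        algebraMap Fq (AlgebraicClosure Fq) (c.coeff j) * (α ^ (r + (i : ℕ))) ^ j
        = ∑ k : Fin m, algebraMap Fq (AlgebraicClosure Fq) (c.coeff (e k)) * (α ^ (r + (i : ℕ))) ^ (e k : ℕ) := by
      rw [← Finset.sum_coe_sort]
      exact (Equiv.sum_comp e.toEquiv _).symm
    rw [hsum] at h0
    rw [← h0]
    apply Finset.sum_congr rfl
    intro k _
    simp only [hv]
    rw [mul_assoc, ← pow_mul, ← pow_mul, ← pow_add, Nat.add_mul, Nat.mul_comm (i:ℕ)]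
  have hv0 : v = 0 :=
    Matrix.eq_zero_of_forall_pow_sum_mul_pow_eq_zero hf hsys
  -- but v is nonzero since c has a nonzero coefficient
  have hm0 : 0 < m := Finset.card_pos.mpr (Polynomial.support_nonempty.mpr hc)
  obtain ⟨k⟩ : Nonempty (Fin m) := ⟨⟨0, hm0⟩⟩
  have hcoeff : c.coeff (e k) ≠ 0 := Polynomial.mem_support_iff.mp (hmem k)
  have hα0 : α ≠ 0 := by
    intro h0
    have := pow_orderOf_eq_one α
    rw [hα, h0, zero_pow hn.ne'] at this
    exact zero_ne_one this
  have : v k = 0 := by rw [hv0]; rfl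
  rw [hv] at this
  rcases mul_eq_zero.mp this with h1 | h2
  · exact hcoeff ((map_eq_zero (algebraMap Fq (AlgebraicClosure Fq))).mp h1)
  · exact hα0 (pow_eq_zero_iff'.mp h2).1
end

section
/- Let q be a prime power, n coprime to q, α of order n over F_q, and C a cyclic code of length n over F_q whose defining set S contains {0, 1, 3, 5}. Then the minimum distance of C is at least 4. -/
open Polynomial

/-- Pure algebra: three nonzero coefficients, three distinct nonzero points
cannot satisfy the power-sum equations for exponents 1, 3, 5. -/
lemma key_alg {K : Type*} [Field K] {a b d x y z : K}
    (ha : a ≠ 0) (hb : b ≠ 0) (hd : d ≠ 0)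
    (hx : x ≠ 0) (hy : y ≠ 0) (hz : z ≠ 0)
    (hxy : x ≠ y) (hxz : x ≠ z) (hyz : y ≠ z)
    (e1 : a*x + (b*y + d*z) = 0) (e3 : a*x^3 + (b*y^3 + d*z^3) = 0)
    (e5 : a*x^5 + (b*y^5 + d*z^5) = 0) : False := by
  have h1 : b*y*(y^2 - x^2) + d*z*(z^2 - x^2) = 0 := by linear_combination e3 - x^2 * e1
  have h2 : b*y^3*(y^2 - x^2) + d*z^3*(z^2 - x^2) = 0 := by linear_combination e5 - x^2 * e3
  have h3 : (b*y*(y^2 - x^2)) * (y^2 - z^2) = 0 := by linear_combination h2 - z^2 * h1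
  rcases mul_eq_zero.mp h3 with h4 | h4
  · rcases mul_eq_zero.mp h4 with h5 | h5
    · exact mul_ne_zero hb hy h5
    · -- y^2 = x^2
      have h6' : d*z*(z^2 - x^2) = 0 := by linear_combination h1 - b*y*h5
      have h7 : z^2 - x^2 = 0 := by
        rcases mul_eq_zero.mp h6' with h | h
        · exact absurd h (mul_ne_zero hd hz)
        · exact h
      have hyx : y + x = 0 := by
        rcases mul_eq_zero.mp (show (y - x)*(y + x) = 0 by linear_combination h5) with h | h
        · exact absurd (sub_eq_zero.mp h).symm hxy
        · exact h
      have hzx : z + x = 0 := by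
        rcases mul_eq_zero.mp (show (z - x)*(z + x) = 0 by linear_combination h7) with h | h
        · exact absurd (sub_eq_zero.mp h).symm hxz
        · exact h
      exact hyz (by linear_combination hyx - hzx)
  · -- y^2 = z^2
    have hyz0 : y + z = 0 := by
      rcases mul_eq_zero.mp (show (y - z)*(y + z) = 0 by linear_combination h4) with h | h
      · exact absurd (sub_eq_zero.mp h) hyz
      · exact h
    have e1' : a*x + (b - d)*y = 0 := by linear_combination e1 - d*hyz0
    have e3' : a*x^3 + (b - d)*y^3 = 0 := by linear_combination e3 - d*(z^2 - z*y + y^2)*hyz0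
    have h8 : (a*x)*(x^2 - y^2) = 0 := by linear_combination e3' - y^2*e1'
    have h9 : x^2 - y^2 = 0 := by
      rcases mul_eq_zero.mp h8 with h | h
      · exact absurd h (mul_ne_zero ha hx)
      · exact h
    have hxy0 : x + y = 0 := by
      rcases mul_eq_zero.mp (show (x - y)*(x + y) = 0 by linear_combination h9) with h | h
      · exact absurd (sub_eq_zero.mp h) hxy
      · exact h
    exact hxz (by linear_combination hxy0 - hyz0)

/-- If the defining set of a cyclic code of length `n` over `F_q` contains
`{0, 1, 3, 5}`, then the minimum distance is at least `4`:
every nonzero codeword has Hamming weight `≥ 4`. -/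
theorem cyclic_code_min_dist (Fq : Type*) [Field Fq] [Fintype Fq]
    (n : ℕ) (hn : 0 < n) (hcop : Nat.Coprime n (Fintype.card Fq))
    (α : AlgebraicClosure Fq) (hα : orderOf α = n)
    (S : Finset ℕ) (hS : ({0, 1, 3, 5} : Finset ℕ) ⊆ S)
    (c : Polynomial Fq) (hc : c ≠ 0) (hdeg : c.natDegree < n)
    (hroot : ∀ i ∈ S, Polynomial.aeval (α ^ i) c = 0) :
    4 ≤ c.support.card := by
  by_contra hcard
  push_neg at hcard
  have hα0 : α ≠ 0 := by
    intro h
    have h1 : α ^ n = 1 := hα ▸ pow_orderOf_eq_one α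
    rw [h, zero_pow hn.ne'] at h1
    exact zero_ne_one h1
  -- injectivity of e ↦ α ^ e on exponents < n
  have hinj : ∀ e < n, ∀ e' < n, α ^ e = α ^ e' → e = e' := by
    intro e he e' he' hee
    set u : (AlgebraicClosure Fq)ˣ := Units.mk0 α hα0 with hu
    have huo : orderOf u = n := by
      rw [← hα, ← orderOf_units]; rfl
    have huee : u ^ e = u ^ e' := Units.ext (by simpa [hu] using hee)
    have hmod := pow_eq_pow_iff_modEq.mp huee
    rw [huo] at hmod
    calc e = e % n := (Nat.mod_eq_of_lt he).symm
    _ = e' % n := hmod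
    _ = e' := Nat.mod_eq_of_lt he'
  have key : ∀ i ∈ S, ∑ e ∈ c.support, algebraMap Fq (AlgebraicClosure Fq) (c.coeff e) * (α ^ e) ^ i = 0 := by
    intro i hi
    have h0 := hroot i hi
    rw [aeval_def, eval₂_eq_sum, Polynomial.sum_def] at h0
    rw [← h0]
    refine Finset.sum_congr rfl fun e _ => ?_
    rw [← pow_mul, ← pow_mul, Nat.mul_comm]
  have hlt : ∀ e ∈ c.support, e < n := fun e he =>
    lt_of_le_of_lt (le_natDegree_of_mem_supp e he) hdeg
  have hco : ∀ e ∈ c.support, algebraMap Fq (AlgebraicClosure Fq) (c.coeff e) ≠ 0 := fun e he h =>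
    mem_support_iff.mp he ((algebraMap Fq (AlgebraicClosure Fq)).injective (by rw [h, map_zero]))
  have h1 : 1 ≤ c.support.card := Finset.card_pos.mpr (Polynomial.support_nonempty.mpr hc)
  interval_cases hcc : c.support.card
  · -- card = 1
    obtain ⟨p, hp⟩ := Finset.card_eq_one.mp hcc
    have e0 := key 0 (hS (by simp))
    rw [hp, Finset.sum_singleton] at e0
    simp only [pow_zero, mul_one] at e0
    exact hco p (by simp [hp]) e0
  · -- card = 2
    obtain ⟨p, q, hpq, hsup⟩ := Finset.card_eq_two.mp hcc
    have e0 := key 0 (hS (by simp))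
    have e1 := key 1 (hS (by simp))
    rw [hsup, Finset.sum_insert (by simp [hpq]), Finset.sum_singleton] at e0 e1
    simp only [pow_zero, pow_one, mul_one] at e0 e1
    have hxy : α ^ p ≠ α ^ q := fun h =>
      hpq (hinj p (hlt p (by simp [hsup])) q (hlt q (by simp [hsup])) h)
    have hkey : algebraMap Fq (AlgebraicClosure Fq) (c.coeff p) * (α ^ p - α ^ q) = 0 := by
      linear_combination e1 - (α ^ q) * e0
    rcases mul_eq_zero.mp hkey with h | h
    · exact hco p (by simp [hsup]) h
    · exact hxy (sub_eq_zero.mp h)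
  · -- card = 3
    obtain ⟨p, q, r, hpq, hpr, hqr, hsup⟩ := Finset.card_eq_three.mp hcc
    have e1 := key 1 (hS (by simp))
    have e3 := key 3 (hS (by simp))
    have e5 := key 5 (hS (by simp))
    rw [hsup, Finset.sum_insert (by simp [hpq, hpr]), Finset.sum_insert (by simp [hqr]),
      Finset.sum_singleton] at e1 e3 e5
    simp only [pow_one] at e1
    have hp' : p ∈ c.support := by simp [hsup]
    have hq' : q ∈ c.support := by simp [hsup]
    have hr' : r ∈ c.support := by simp [hsup]
    exact key_alg (hco p hp') (hco q hq') (hco r hr')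
      (pow_ne_zero _ hα0) (pow_ne_zero _ hα0) (pow_ne_zero _ hα0)
      (fun h => hpq (hinj p (hlt p hp') q (hlt q hq') h))
      (fun h => hpr (hinj p (hlt p hp') r (hlt r hr') h))
      (fun h => hqr (hinj q (hlt q hq') r (hlt r hr') h))
      e1 e3 e5
end

section
/- Let r be an odd integer ≥ 3 and F a field. Define F_r(x_1, x_2) to be the polynomial obtained by substituting x_3 = −x_1 − x_2 into f[{0,1,r}](x_1, x_2, x_3) = Δ[{0,1,r}]/Δ_3. Then x_1, x_2, and x_1 + x_2 all divide F_r in F[x_1, x_2]. -/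
open MvPolynomial

/-- `Δ[{0,1,r}]` with `x₃ = -x₁ - x₂` substituted, as a polynomial in `F[x₁, x₂]`. -/
noncomputable def DeltaSub (F : Type*) [Field F] (r : ℕ) : MvPolynomial (Fin 2) F :=
  (Matrix.of ![![1, 1, 1], ![X 0, X 1, -X 0 - X 1],
    ![(X 0) ^ r, (X 1) ^ r, (-X 0 - X 1) ^ r]]).det

/-- The Vandermonde determinant `Δ₃ = (x₂-x₁)(x₃-x₁)(x₃-x₂)` with `x₃ = -x₁-x₂`. -/
noncomputable def VandSub (F : Type*) [Field F] : MvPolynomial (Fin 2) F :=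
  (X 1 - X 0) * ((-X 0 - X 1) - X 0) * ((-X 0 - X 1) - X 1)


lemma Xzero_dvd_iff (R : Type*) [CommRing R] (u : MvPolynomial (Fin 2) R) :
    X 0 ∣ u ↔ (aeval ![0, X 0] u : MvPolynomial (Fin 1) R) = 0 := by
  have hhom : (aeval ![(0 : MvPolynomial (Fin 1) R), X 0]) =
      (((Polynomial.aeval (0 : MvPolynomial (Fin 1) R)).restrictScalars R).comp
        (finSuccEquiv R 1).toAlgHom) := by
    apply algHom_ext
    intro i
    fin_cases i
    · simp [finSuccEquiv_X_zero]
    · have h1 : (MvPolynomial.finSuccEquiv R 1) (X 1) = Polynomial.C (X 0) :=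
        finSuccEquiv_X_succ (j := 0)
      simp [h1]
  have hkey : ∀ v : MvPolynomial (Fin 2) R,
      (aeval ![0, X 0] v : MvPolynomial (Fin 1) R)
        = Polynomial.eval 0 (finSuccEquiv R 1 v) := by
    intro v
    rw [hhom]
    simp [Polynomial.coe_aeval_eq_eval]
  rw [hkey]
  constructor
  · rintro ⟨w, rfl⟩
    simp [map_mul, finSuccEquiv_X_zero]
  · intro h
    have : Polynomial.X ∣ finSuccEquiv R 1 u := by
      rw [Polynomial.X_dvd_iff, Polynomial.coeff_zero_eq_eval_zero, h]
    obtain ⟨w, hw⟩ := this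
    refine ⟨(finSuccEquiv R 1).symm w, ?_⟩
    apply (finSuccEquiv R 1).injective
    simp [map_mul, hw, finSuccEquiv_X_zero]

noncomputable def substEquiv {R : Type*} [CommRing R] (p q p' q' : MvPolynomial (Fin 2) R)
    (h1 : aeval ![p, q] p' = X 0) (h2 : aeval ![p, q] q' = X 1)
    (h3 : aeval ![p', q'] p = X 0) (h4 : aeval ![p', q'] q = X 1) :
    MvPolynomial (Fin 2) R ≃ₐ[R] MvPolynomial (Fin 2) R :=
  AlgEquiv.ofAlgHom (aeval ![p, q]) (aeval ![p', q'])
    (by apply algHom_ext; intro i; fin_cases i; · simpa using h1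
        · simpa using h2)
    (by apply algHom_ext; intro i; fin_cases i; · simpa using h3
        · simpa using h4)

@[simp] lemma substEquiv_apply {R : Type*} [CommRing R] (p q p' q' : MvPolynomial (Fin 2) R)
    (h1 h2 h3 h4) (u : MvPolynomial (Fin 2) R) :
    substEquiv p q p' q' h1 h2 h3 h4 u = aeval ![p, q] u := rfl

@[simp] lemma substEquiv_symm_apply {R : Type*} [CommRing R] (p q p' q' : MvPolynomial (Fin 2) R)
    (h1 h2 h3 h4) (u : MvPolynomial (Fin 2) R) :
    (substEquiv p q p' q' h1 h2 h3 h4).symm u = aeval ![p', q'] u := rfl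

lemma prime_X0 {R : Type*} [CommRing R] [IsDomain R] :
    Prime (X 0 : MvPolynomial (Fin 2) R) := by
  have := MulEquiv.prime_iff (MvPolynomial.finSuccEquiv R 1).toMulEquiv
    (p := (X 0 : MvPolynomial (Fin 2) R))
  rw [← this]
  simpa [finSuccEquiv_X_zero] using
    (Polynomial.prime_X (R := MvPolynomial (Fin 1) R))

section IntPart
open MvPolynomial

noncomputable def DZ (r : ℕ) : MvPolynomial (Fin 2) ℤ :=
  (Matrix.of ![![1, 1, 1], ![X 0, X 1, -X 0 - X 1],
    ![(X 0) ^ r, (X 1) ^ r, (-X 0 - X 1) ^ r]]).det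

noncomputable def VZ : MvPolynomial (Fin 2) ℤ :=
  (X 1 - X 0) * ((-X 0 - X 1) - X 0) * ((-X 0 - X 1) - X 1)

lemma DZ_expand (r : ℕ) : DZ r =
    X 1 * (-X 0 - X 1) ^ r - (-X 0 - X 1) * X 1 ^ r
      - (X 0 * (-X 0 - X 1) ^ r - (-X 0 - X 1) * X 0 ^ r)
      + (X 0 * X 1 ^ r - X 1 * X 0 ^ r) := by
  rw [DZ, Matrix.det_fin_three]
  simp
  ring

-- master divisibility test
lemma dvd_iff_test {R : Type*} [CommRing R]
    (e : MvPolynomial (Fin 2) R ≃ₐ[R] MvPolynomial (Fin 2) R) (q : MvPolynomial (Fin 2) R) :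
    e (X 0) ∣ q ↔ (aeval ![0, X 0] (e.symm q) : MvPolynomial (Fin 1) R) = 0 := by
  rw [← Xzero_dvd_iff]
  constructor
  · intro h
    simpa using map_dvd e.symm.toAlgHom h
  · intro h
    simpa using map_dvd e.toAlgHom h

lemma prime_e {R : Type*} [CommRing R] [IsDomain R]
    (e : MvPolynomial (Fin 2) R ≃ₐ[R] MvPolynomial (Fin 2) R) : Prime (e (X 0)) := by
  exact ((MulEquiv.prime_iff e.toMulEquiv).mpr prime_X0)

end IntPart

section Equivs
variable {R : Type*} [CommRing R]

noncomputable def eSwap : MvPolynomial (Fin 2) R ≃ₐ[R] MvPolynomial (Fin 2) R :=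
  substEquiv (X 1) (X 0) (X 1) (X 0) (by simp) (by simp) (by simp) (by simp)

noncomputable def eSum : MvPolynomial (Fin 2) R ≃ₐ[R] MvPolynomial (Fin 2) R :=
  substEquiv (X 0 + X 1) (X 1) (X 0 - X 1) (X 1)
    (by simp) (by simp) (by simp) (by simp)

noncomputable def eP1 : MvPolynomial (Fin 2) R ≃ₐ[R] MvPolynomial (Fin 2) R :=
  substEquiv (X 1 - X 0) (X 1) (X 1 - X 0) (X 1)
    (by simp) (by simp) (by simp) (by simp)

noncomputable def eP2 : MvPolynomial (Fin 2) R ≃ₐ[R] MvPolynomial (Fin 2) R :=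
  substEquiv (2 * X 0 + X 1) (X 0 + X 1) (X 0 - X 1) (2 * X 1 - X 0)
    (by simp [map_ofNat]; ring) (by simp [map_ofNat]; ring) (by simp [map_ofNat]; ring) (by simp [map_ofNat]; ring)

noncomputable def eP3 : MvPolynomial (Fin 2) R ≃ₐ[R] MvPolynomial (Fin 2) R :=
  substEquiv (X 0 + 2 * X 1) (X 0 + X 1) (2 * X 1 - X 0) (X 0 - X 1)
    (by simp [map_ofNat]; ring) (by simp [map_ofNat]; ring) (by simp [map_ofNat]; ring) (by simp [map_ofNat]; ring)

end Equivs

section Main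
open MvPolynomial

local notation "M2" => MvPolynomial (Fin 2) ℤ
local notation "M1" => MvPolynomial (Fin 1) ℤ

lemma VZ_eq : VZ = (X 1 - X 0) * (2 * X 0 + X 1) * (X 0 + 2 * X 1) := by
  rw [VZ]; ring

lemma not_dvd_aux (p q : M2) (v : Fin 2 → ℤ) (hp : eval v p = 0) (hq : eval v q ≠ 0) :
    ¬ p ∣ q := by
  intro h
  exact hq (by obtain ⟨c, rfl⟩ := h; simp [hp])

lemma int_side (r : ℕ) (hodd : Odd r) : ∃ G : M2,
    DZ r = VZ * G ∧ X 0 ∣ G ∧ X 1 ∣ G ∧ (X 0 + X 1) ∣ G := by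
  have hrP1 : Prime (X 1 - X 0 : M2) := by
    have := prime_e (R := ℤ) eP1; simpa [eP1] using this
  have hrP2 : Prime (2 * X 0 + X 1 : M2) := by
    have := prime_e (R := ℤ) eP2; simpa [eP2] using this
  have hrP3 : Prime (X 0 + 2 * X 1 : M2) := by
    have := prime_e (R := ℤ) eP3; simpa [eP3] using this
  -- divisibility of DZ by the three primes
  have hd1 : (X 1 - X 0 : M2) ∣ DZ r := by
    have he : (eP1 (X 0) : M2) = X 1 - X 0 := by simp [eP1]
    rw [← he, dvd_iff_test]
    show (aeval ![0, X 0] (aeval ![X 1 - X 0, X 1] (DZ r)) : M1) = 0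
    rw [DZ_expand]
    simp
  have hd2 : (2 * X 0 + X 1 : M2) ∣ DZ r := by
    have he : (eP2 (X 0) : M2) = 2 * X 0 + X 1 := by simp [eP2]
    rw [← he, dvd_iff_test]
    show (aeval ![0, X 0] (aeval ![X 0 - X 1, 2 * X 1 - X 0] (DZ r)) : M1) = 0
    rw [DZ_expand]
    simp [map_ofNat]
    ring
  have hd3 : (X 0 + 2 * X 1 : M2) ∣ DZ r := by
    have he : (eP3 (X 0) : M2) = X 0 + 2 * X 1 := by simp [eP3]
    rw [← he, dvd_iff_test]
    show (aeval ![0, X 0] (aeval ![2 * X 1 - X 0, X 0 - X 1] (DZ r)) : M1) = 0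
    rw [DZ_expand]
    simp [map_ofNat]
    ring
  -- non-divisibilities between the primes
  have hn21 : ¬ (2 * X 0 + X 1 : M2) ∣ (X 1 - X 0) :=
    not_dvd_aux _ _ ![1, -2] (by simp) (by simp)
  have hn31 : ¬ (X 0 + 2 * X 1 : M2) ∣ (X 1 - X 0) :=
    not_dvd_aux _ _ ![2, -1] (by simp) (by simp)
  have hn32 : ¬ (X 0 + 2 * X 1 : M2) ∣ (2 * X 0 + X 1) :=
    not_dvd_aux _ _ ![2, -1] (by simp) (by simp)
  -- extract G
  obtain ⟨D1, hD1⟩ := hd1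
  have h2' : (2 * X 0 + X 1 : M2) ∣ D1 := by
    rcases (hrP2.dvd_mul.mp (hD1 ▸ hd2)) with h | h
    · exact absurd h hn21
    · exact h
  obtain ⟨D2, hD2⟩ := h2'
  have h3' : (X 0 + 2 * X 1 : M2) ∣ D2 := by
    have : (X 0 + 2 * X 1 : M2) ∣ (X 1 - X 0) * ((2 * X 0 + X 1) * D2) := by
      rw [← hD2, ← hD1]; exact hd3
    rcases hrP3.dvd_mul.mp this with h | h
    · exact absurd h hn31
    rcases hrP3.dvd_mul.mp h with h' | h'
    · exact absurd h' hn32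
    · exact h'
  obtain ⟨G, hG⟩ := h3'
  have hEq : DZ r = VZ * G := by rw [hD1, hD2, hG, VZ_eq]; ring
  have hr0 : r ≠ 0 := hodd.pos.ne'
  have hne : ∀ c : ℤ, c ≠ 0 → (MvPolynomial.C c * X 0 ^ 3 : M1) ≠ 0 := by
    intro c hc h
    have := congrArg (eval ![(1 : ℤ)]) h
    simp [hc] at this
  refine ⟨G, hEq, ?_, ?_, ?_⟩
  · rw [Xzero_dvd_iff]
    have hD : (aeval ![(0 : M1), X 0]) (DZ r) = 0 := by
      rw [DZ_expand]
      simp [zero_pow hr0, hodd.neg_pow]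
    have hV : (aeval ![(0 : M1), X 0]) VZ = MvPolynomial.C 2 * X 0 ^ 3 := by
      rw [VZ]; simp; ring
    have := congrArg (aeval ![(0 : M1), X 0]) hEq
    rw [hD, map_mul, hV] at this
    rcases mul_eq_zero.mp this.symm with h | h
    · exact absurd h (hne 2 (by norm_num))
    · exact h
  · have he : (eSwap (X 0) : M2) = X 1 := by simp [eSwap]
    rw [← he, dvd_iff_test]
    show (aeval ![0, X 0] (aeval ![X 1, X 0] G) : M1) = 0
    have hD : (aeval ![(0 : M1), X 0]) ((aeval ![X 1, X 0] : M2 →ₐ[ℤ] M2) (DZ r)) = 0 := by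
      rw [DZ_expand]
      simp [zero_pow hr0, hodd.neg_pow]
    have hV : (aeval ![(0 : M1), X 0]) ((aeval ![X 1, X 0] : M2 →ₐ[ℤ] M2) VZ)
        = MvPolynomial.C (-2) * X 0 ^ 3 := by
      rw [VZ]; simp; ring
    have := congrArg (fun z : M2 => (aeval ![(0 : M1), X 0]) ((aeval ![X 1, X 0] : M2 →ₐ[ℤ] M2) z)) hEq
    simp only [map_mul] at this
    rw [hD, hV] at this
    rcases mul_eq_zero.mp this.symm with h | h
    · exact absurd h (hne (-2) (by norm_num))
    · exact h
  · have he : (eSum (X 0) : M2) = X 0 + X 1 := by simp [eSum]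
    rw [← he, dvd_iff_test]
    show (aeval ![0, X 0] (aeval ![X 0 - X 1, X 1] G) : M1) = 0
    have hD : (aeval ![(0 : M1), X 0]) ((aeval ![X 0 - X 1, X 1] : M2 →ₐ[ℤ] M2) (DZ r)) = 0 := by
      rw [DZ_expand]
      simp [zero_pow hr0, hodd.neg_pow]
    have hV : (aeval ![(0 : M1), X 0]) ((aeval ![X 0 - X 1, X 1] : M2 →ₐ[ℤ] M2) VZ)
        = MvPolynomial.C (-2) * X 0 ^ 3 := by
      rw [VZ]; simp; ring
    have := congrArg (fun z : M2 => (aeval ![(0 : M1), X 0]) ((aeval ![X 0 - X 1, X 1] : M2 →ₐ[ℤ] M2) z)) hEq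
    simp only [map_mul] at this
    rw [hD, hV] at this
    rcases mul_eq_zero.mp this.symm with h | h
    · exact absurd h (hne (-2) (by norm_num))
    · exact h

end Main

lemma DeltaSub_expand (F : Type*) [Field F] (r : ℕ) : DeltaSub F r =
    X 1 * (-X 0 - X 1) ^ r - (-X 0 - X 1) * X 1 ^ r
      - (X 0 * (-X 0 - X 1) ^ r - (-X 0 - X 1) * X 0 ^ r)
      + (X 0 * X 1 ^ r - X 1 * X 0 ^ r) := by
  rw [DeltaSub, Matrix.det_fin_three]
  simp
  ring


/-- For odd `r ≥ 3`, the polynomial `F_r(x₁,x₂) = f[{0,1,r}](x₁, x₂, -x₁-x₂)`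
is divisible by `x₁`, by `x₂` and by `x₁ + x₂` in `F[x₁,x₂]`. -/
theorem Fr_divisibility_odd (F : Type*) [Field F] (r : ℕ) (hr : 3 ≤ r) (hodd : Odd r)
    (Fr : MvPolynomial (Fin 2) F) (hFr : DeltaSub F r = VandSub F * Fr) :
    (X 0 : MvPolynomial (Fin 2) F) ∣ Fr ∧ (X 1 : MvPolynomial (Fin 2) F) ∣ Fr ∧
      (X 0 + X 1 : MvPolynomial (Fin 2) F) ∣ Fr := by
  obtain ⟨G, hEq, hG0, hG1, hGs⟩ := int_side r hodd
  set φ : MvPolynomial (Fin 2) ℤ →+* MvPolynomial (Fin 2) F :=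
    (MvPolynomial.map (Int.castRingHom F)) with hφ
  have hφD : φ (DZ r) = DeltaSub F r := by
    rw [DZ_expand, DeltaSub_expand]
    simp [hφ]
  have hφV : φ VZ = VandSub F := by
    rw [VZ, VandSub]
    simp [hφ]
  have f1 : (X 1 - X 0 : MvPolynomial (Fin 2) F) ≠ 0 := fun h => by
    simpa using congrArg (eval ![(0 : F), 1]) h
  have f2 : ((-X 0 - X 1) - X 0 : MvPolynomial (Fin 2) F) ≠ 0 := fun h => by
    simpa using congrArg (eval ![(0 : F), 1]) h
  have f3 : ((-X 0 - X 1) - X 1 : MvPolynomial (Fin 2) F) ≠ 0 := fun h => by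
    simpa using congrArg (eval ![(1 : F), 0]) h
  have hVne : VandSub F ≠ 0 := by
    rw [VandSub]; exact mul_ne_zero (mul_ne_zero f1 f2) f3
  have hFrG : Fr = φ G := by
    apply mul_left_cancel₀ hVne
    rw [← hFr, ← hφV, ← map_mul, ← hEq, hφD]
  rw [hFrG]
  refine ⟨?_, ?_, ?_⟩
  · simpa [hφ] using map_dvd φ hG0
  · simpa [hφ] using map_dvd φ hG1
  · simpa [hφ] using map_dvd φ hGs
end

section
/- Let F be a field, m ≥ 2, and x_1, x_2, x_3, x_4 ∈ F. Suppose there exist A, B, C, D, E, G ∈ F such that x_i^{m+1} = A + B x_i + C x_i^m and x_i^{2m} = D + E x_i + G x_i^m for all i = 1,2,3,4. Then x_i^{2m+1} = (AB + CD) + (B² + CE) x_i + (A + BC + CG) x_i^m for all i; in particular, if the 4×4 matrices with exponent sets {0,1,m,m+1}, {0,1,m,2m} (rows indexed by these exponents, columns by x_1,...,x_4) are singular for distinct x_i, then the matrix with exponent set {0,1,m,2m+1} is also singular. -/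
set_option maxHeartbeats 2000000


/-- If `xᵢ^(m+1) = A + B xᵢ + C xᵢ^m` and `xᵢ^(2m) = D + E xᵢ + G xᵢ^m` hold
uniformly for `i = 1,2,3,4`, then
`xᵢ^(2m+1) = (AB + CD) + (B² + CE) xᵢ + (A + BC + CG) xᵢ^m` for all `i`;
in particular the matrix with exponent set `{0, 1, m, 2m+1}` is singular. -/
theorem x_pow_2m_plus_1 (F : Type*) [Field F] (m : ℕ) (hm : 2 ≤ m)
    (x : Fin 4 → F) (A B C D E G : F)
    (h1 : ∀ i, x i ^ (m + 1) = A + B * x i + C * x i ^ m)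
    (h2 : ∀ i, x i ^ (2 * m) = D + E * x i + G * x i ^ m) :
    (∀ i, x i ^ (2 * m + 1)
        = (A * B + C * D) + (B ^ 2 + C * E) * x i + (A + B * C + C * G) * x i ^ m) ∧
      (Matrix.of ![![1, 1, 1, 1], ![x 0, x 1, x 2, x 3],
        ![x 0 ^ m, x 1 ^ m, x 2 ^ m, x 3 ^ m],
        ![x 0 ^ (2 * m + 1), x 1 ^ (2 * m + 1), x 2 ^ (2 * m + 1),
          x 3 ^ (2 * m + 1)]]).det = 0 := by
  have key : ∀ i, x i ^ (2 * m + 1)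
      = (A * B + C * D) + (B ^ 2 + C * E) * x i + (A + B * C + C * G) * x i ^ m := by
    intro i
    have h : x i ^ (2 * m + 1) = x i ^ m * x i ^ (m + 1) := by
      rw [← pow_add]; ring_nf
    rw [h, h1 i]
    have h2m : x i ^ m * x i ^ m = x i ^ (2 * m) := by rw [← pow_add]; ring_nf
    have : x i ^ m * (A + B * x i + C * x i ^ m)
        = A * x i ^ m + B * (x i ^ m * x i) + C * (x i ^ m * x i ^ m) := by ring
    rw [this, h2m, h2 i]
    have hx : x i ^ m * x i = x i ^ (m + 1) := by rw [← pow_succ]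
    rw [hx, h1 i]
    ring
  refine ⟨key, ?_⟩
  rw [← Matrix.exists_vecMul_eq_zero_iff]
  refine ⟨![A * B + C * D, B ^ 2 + C * E, A + B * C + C * G, -1], ?_, ?_⟩
  · intro h
    have := congrFun h 3
    simp at this
  · funext j
    fin_cases j <;>
      simp [Matrix.vecMul, dotProduct, Fin.sum_univ_four, key 0, key 1, key 2, key 3] <;>
      ring
end

section
/- Let t, k, m be positive integers with m > t, and let ζ be a primitive m-th root of unity in a field F. Let T = {jm + i : 0 ≤ j ≤ k, 0 ≤ i ≤ t−1}. For any (t+k)-tuple (x_1, ..., x_{t+k}) ∈ F^{t+k} in which t+1 of the coordinates take the values 1, ζ^{i_1}, ..., ζ^{i_t} with 0, i_1, ..., i_t distinct modulo m (and the remaining k−1 coordinates arbitrary), the determinant Δ[T'] vanishes for every subset T' ⊆ T of size t+k; i.e., such points lie on V(T, t+k). -/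
/-- Hartmann–Tzeng configuration: let `T = {jm + i : 0 ≤ j ≤ k, 0 ≤ i ≤ t-1}` and
`ζ` a primitive `m`-th root of unity (`m > t`). If `t+1` of the coordinates of
`x ∈ F^(t+k)` are `ζ^(i₀), ζ^(i₁), …, ζ^(i_t)` with `i₀ = 0` and the `i_j`
pairwise distinct modulo `m` (the remaining `k-1` coordinates arbitrary), then
`Δ[T'](x) = 0` for every exponent set `T' ⊆ T` of size `t+k`; i.e. such points
lie on `V(T, t+k)`. -/
theorem hartmann_tzeng_linear_subspaces (F : Type*) [Field F]
    (t k m : ℕ) (ht : 0 < t) (hk : 0 < k) (hm : t < m)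
    (ζ : F) (hζ : IsPrimitiveRoot ζ m)
    (x : Fin (t + k) → F)
    (e : Fin (t + 1) → Fin (t + k)) (he : Function.Injective e)
    (idx : Fin (t + 1) → ℕ) (hidx0 : idx ⟨0, Nat.succ_pos t⟩ = 0)
    (hidx : ∀ a b : Fin (t + 1), a ≠ b → idx a % m ≠ idx b % m)
    (hx : ∀ j, x (e j) = ζ ^ idx j)
    (U : Fin (t + k) → ℕ)
    (hU : ∀ a, ∃ j ≤ k, ∃ i < t, U a = j * m + i) :
    (Matrix.of fun a b => x b ^ U a).det = 0 := by
  have hζm : ζ ^ m = 1 := hζ.pow_eq_one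
  choose J hJ I hI hUeq using hU
  -- the t+1 candidate column "profiles", living in the t-dimensional space `Fin t → F`
  set g : Fin (t + 1) → (Fin t → F) := fun j i => (ζ ^ idx j) ^ (i : ℕ) with hg
  have hdep : ¬ LinearIndependent F g := by
    intro h
    have hcard := h.fintype_card_le_finrank
    simp [Module.finrank_fintype_fun_eq_card] at hcard
  rw [Fintype.not_linearIndependent_iff] at hdep
  obtain ⟨c, hsum, j0, hj0⟩ := hdep
  rw [← Matrix.exists_mulVec_eq_zero_iff]
  refine ⟨fun b => ∑ j, if e j = b then c j else 0, ?_, ?_⟩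
  · intro hv
    have := congrFun hv (e j0)
    simp only [Pi.zero_apply, he.eq_iff, Finset.sum_ite_eq'] at this
    simp only [Finset.mem_univ, if_true] at this
    exact hj0 this
  · funext a
    simp only [Matrix.mulVec, dotProduct, Matrix.of_apply, Pi.zero_apply]
    have key : ∀ j : Fin (t + 1), x (e j) ^ U a = g j ⟨I a, hI a⟩ := by
      intro j
      have h1 : (ζ ^ idx j) ^ (J a * m) = 1 := by
        rw [← pow_mul, show idx j * (J a * m) = m * (idx j * J a) by ring, pow_mul, hζm,
          one_pow]
      rw [hx j, hUeq a, pow_add, h1, one_mul]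
    calc (∑ b, x b ^ U a * ∑ j, if e j = b then c j else 0)
        = ∑ b, ∑ j, (if e j = b then x b ^ U a * c j else 0) := by
          refine Finset.sum_congr rfl fun b _ => ?_
          rw [Finset.mul_sum]
          exact Finset.sum_congr rfl fun j _ => by split <;> simp
      _ = ∑ j, ∑ b, (if e j = b then x b ^ U a * c j else 0) := Finset.sum_comm
      _ = ∑ j : Fin (t+1), x (e j) ^ U a * c j := by
          refine Finset.sum_congr rfl fun j _ => ?_
          simp
      _ = ∑ j : Fin (t+1), c j * g j ⟨I a, hI a⟩ := by
          refine Finset.sum_congr rfl fun j _ => ?_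
          rw [key j, mul_comm]
      _ = 0 := by
          have := congrFun hsum ⟨I a, hI a⟩
          simpa [Finset.sum_apply] using this
end
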